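/- Define D(z) = z^{α/2}/φ(z)^{α/2} for z ∈ ℂ \ [0,1], with φ(z) = 2(z-1/2)+2z^{1/2}(z-1)^{1/2} and principal branches, α > -1. Then D is holomorphic and non-vanishing on ℂ \ [0,1], its boundary values satisfy D₊(x)·D₋(x) = x^α for all x ∈ (0,1), and lim_{z→∞} D(z) = 2^{-α}. -/

import Mathlib

open Filter

/-- The conformal map `φ(z) = 2(z - 1/2) + 2 z^{1/2}(z-1)^{1/2}` (principal branches). -/
noncomputable def phiMap (z : ℂ) : ℂ :=
  2 * (z - 1/2) + 2 * z ^ ((1:ℂ)/2) * (z - 1) ^ ((1:ℂ)/2)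

/-- The Szegő function `D(z) = z^{α/2}/φ(z)^{α/2}` of the weight `x^α` on `(0,1)`. -/
noncomputable def szego (α : ℝ) (z : ℂ) : ℂ :=
  z ^ ((α : ℂ)/2) / (phiMap z) ^ ((α : ℂ)/2)

/-- The segment `[0,1]` viewed as a subset of `ℂ`. -/
def unitSegment : Set ℂ := (fun x : ℝ => (x : ℂ)) '' Set.Icc 0 1

/-!
Off the segment put `q = 1 - 1/z`. Then `z^{1/2} (z-1)^{1/2} = z q^{1/2}` and hence
`φ(z) = z u(z)^2` with `u(z) = 1 + q^{1/2}`, a function with `Re u ≥ 1`. The principal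
branches are compatible, `log φ = log z + 2 log u`, because `arg (1 + w)` lies between `0` and
`arg w` when `Re w ≥ 0`, so `arg z + 2 arg u` lies between `arg z` and
`arg z + arg q = arg (z - 1)`. Therefore `D = u^{-α}` off the segment, which is holomorphic and
nonzero. As `z → ∞`, `q → 1` and `D → 2^{-α}`. As `z → x ± i0` with `0 < x < 1`, `q` tends to
`1 - 1/x < 0` from the half-plane `± Im > 0`, so `u → 1 ± i t` with `t^2 = 1/x - 1`, and
`D₊ D₋ = ((1 + i t)(1 - i t))^{-α} = (1/x)^{-α} = x^α`.
-/

open Complex Set Topology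
open scoped Real

namespace Complex

lemma log_cpow_half (w : ℂ) : log (w ^ ((1:ℂ)/2)) = log w / 2 := by
  rcases eq_or_ne w 0 with rfl | hw
  · simp
  rw [cpow_def_of_ne_zero hw, log_exp] <;>
    simp only [mul_one_div, div_ofNat_im, log_im] <;>
    linarith [neg_pi_lt_arg w, arg_le_pi w, Real.pi_pos]

lemma arg_cpow_half (w : ℂ) : arg (w ^ ((1:ℂ)/2)) = arg w / 2 := by
  simpa only [log_im, div_ofNat_im] using congrArg im (log_cpow_half w)

lemma cpow_half_sq (w : ℂ) : (w ^ ((1:ℂ)/2)) ^ 2 = w := by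
  rw [one_div]; exact cpow_ofNat_inv_pow w 2

lemma re_cpow_half_nonneg (w : ℂ) : 0 ≤ (w ^ ((1:ℂ)/2)).re := by
  rw [one_div, cpow_inv_two_re]; positivity

lemma cpow_half_eq_of_im_nonneg {w : ℂ} (hw : 0 ≤ w.im) :
    w ^ ((1:ℂ)/2) = √((‖w‖ + w.re) / 2) + √((‖w‖ - w.re) / 2) * I := by
  apply Complex.ext <;> simp [one_div, cpow_inv_two_re, cpow_inv_two_im_eq_sqrt hw]

lemma cpow_half_eq_of_im_neg {w : ℂ} (hw : w.im < 0) :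
    w ^ ((1:ℂ)/2) = √((‖w‖ + w.re) / 2) - √((‖w‖ - w.re) / 2) * I := by
  apply Complex.ext <;> simp [one_div, cpow_inv_two_re, cpow_inv_two_im_eq_neg_sqrt hw]

lemma arg_one_add_mem_uIcc {s : ℂ} (hs : 0 ≤ s.re) : arg (1 + s) ∈ uIcc 0 (arg s) := by
  rcases eq_or_ne s 0 with rfl | hs0
  · simp
  have hnorm : ‖s‖ ≤ ‖1 + s‖ := by
    rw [← sq_le_sq₀ (norm_nonneg _) (norm_nonneg _), ← normSq_eq_norm_sq, ← normSq_eq_norm_sq,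
      normSq_apply, normSq_apply]
    simp only [add_re, one_re, add_im, one_im, zero_add]
    nlinarith
  have hpos : 0 < ‖s‖ := norm_pos_iff.mpr hs0
  have hmem : s.im / ‖1 + s‖ ∈ uIcc 0 (s.im / ‖s‖) := by
    rcases le_total 0 s.im with him | him
    · exact mem_uIcc.mpr (Or.inl ⟨by positivity, div_le_div_of_nonneg_left him hpos hnorm⟩)
    · refine mem_uIcc.mpr (Or.inr ⟨?_, div_nonpos_of_nonpos_of_nonneg him (norm_nonneg _)⟩)
      rw [div_le_div_iff₀ hpos (hpos.trans_le hnorm)]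
      nlinarith
  have hre : 0 ≤ (1 + s).re := by simp only [add_re, one_re]; linarith
  simpa [arg_of_re_nonneg hs, arg_of_re_nonneg hre] using Real.monotone_arcsin.mapsTo_uIcc hmem

lemma mul_cpow_of_re_pos {a b : ℂ} (ha : 0 < a.re) (hb : 0 < b.re) (c : ℂ) :
    (a * b) ^ c = a ^ c * b ^ c := by
  have ha0 : a ≠ 0 := fun h => by simp [h] at ha
  have hb0 : b ≠ 0 := fun h => by simp [h] at hb
  have hlog : log (a * b) = log a + log b := by
    have := abs_lt.mp (abs_arg_lt_pi_div_two_iff.mpr (Or.inl ha))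
    have := abs_lt.mp (abs_arg_lt_pi_div_two_iff.mpr (Or.inl hb))
    exact (log_mul_eq_add_log_iff ha0 hb0).mpr ⟨by linarith, by linarith⟩
  rw [cpow_def_of_ne_zero (mul_ne_zero ha0 hb0), cpow_def_of_ne_zero ha0,
    cpow_def_of_ne_zero hb0, hlog, add_mul, exp_add]

end Complex

noncomputable def phiFactor (z : ℂ) : ℂ := 1 + (1 - z⁻¹) ^ ((1:ℂ)/2)

lemma re_phiFactor_pos (z : ℂ) : 0 < (phiFactor z).re := by
  have := re_cpow_half_nonneg (1 - z⁻¹)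
  simp only [phiFactor, add_re, one_re]
  linarith

lemma phiFactor_mem_slitPlane (z : ℂ) : phiFactor z ∈ slitPlane :=
  mem_slitPlane_iff.mpr (Or.inl (re_phiFactor_pos z))

lemma phiFactor_ne_zero (z : ℂ) : phiFactor z ≠ 0 :=
  slitPlane_ne_zero (phiFactor_mem_slitPlane z)

lemma isCompact_unitSegment : IsCompact unitSegment :=
  isCompact_Icc.image continuous_ofReal

lemma mem_unitSegment_of_im_eq_zero {z : ℂ} (him : z.im = 0) (h0 : 0 ≤ z.re) (h1 : z.re ≤ 1) :
    z ∈ unitSegment :=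
  ⟨z.re, ⟨h0, h1⟩, by simp [Complex.ext_iff, him]⟩

lemma notMem_unitSegment_of_im_ne_zero {z : ℂ} (h : z.im ≠ 0) : z ∉ unitSegment := by
  rintro ⟨x, -, rfl⟩
  exact h (ofReal_im x)

section OffSegment

variable {z : ℂ}

lemma ne_zero_of_notMem_unitSegment (hz : z ∉ unitSegment) : z ≠ 0 := by
  rintro rfl; exact hz (mem_unitSegment_of_im_eq_zero rfl le_rfl zero_le_one)

lemma sub_one_ne_zero_of_notMem_unitSegment (hz : z ∉ unitSegment) : z - 1 ≠ 0 := by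
  rw [sub_ne_zero]; rintro rfl; exact hz (mem_unitSegment_of_im_eq_zero rfl zero_le_one le_rfl)

lemma arg_sub_one_sub_arg_mem_Ioo (hz : z ∉ unitSegment) :
    arg (z - 1) - arg z ∈ Ioo (-π) π := by
  have h1 : (z - 1).im = z.im := by simp
  rcases lt_trichotomy z.im 0 with him | him | him
  · have := arg_neg_iff.mpr him
    have := arg_neg_iff.mpr (h1 ▸ him)
    constructor <;> linarith [neg_pi_lt_arg z, neg_pi_lt_arg (z - 1)]
  · have hre : z.re < 0 ∨ 1 < z.re := by
      by_contra! h
      exact hz (mem_unitSegment_of_im_eq_zero him h.1 h.2)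
    have heq : arg (z - 1) = arg z := by
      rcases hre with hre | hre
      · rw [arg_eq_pi_iff.mpr ⟨hre, him⟩,
          arg_eq_pi_iff.mpr ⟨by simp only [sub_re, one_re]; linarith, by simp [him]⟩]
      · rw [arg_eq_zero_iff.mpr ⟨by linarith, him⟩,
          arg_eq_zero_iff.mpr ⟨by simp only [sub_re, one_re]; linarith, by simp [him]⟩]
    rw [heq, sub_self]; exact ⟨by linarith [Real.pi_pos], Real.pi_pos⟩
  · have := arg_nonneg_iff.mpr him.le
    have := arg_nonneg_iff.mpr (h1 ▸ him).le
    have := arg_lt_pi_iff.mpr (Or.inr him.ne')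
    have := arg_lt_pi_iff.mpr (Or.inr (h1 ▸ him).ne')
    constructor <;> linarith

lemma arg_one_sub_inv (hz : z ∉ unitSegment) : arg (1 - z⁻¹) = arg (z - 1) - arg z := by
  have hz0 := ne_zero_of_notMem_unitSegment hz
  have hq : 1 - z⁻¹ = (z - 1) / z := by field_simp
  obtain ⟨hlo, hhi⟩ := arg_sub_one_sub_arg_mem_Ioo hz
  rw [hq, arg_coe_angle_eq_iff_eq_toReal.mp (arg_div_coe_angle
    (sub_one_ne_zero_of_notMem_unitSegment hz) hz0), ← Real.Angle.coe_sub,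
    Real.Angle.toReal_coe_eq_self_iff.mpr ⟨hlo, hhi.le⟩]

lemma one_sub_inv_mem_slitPlane (hz : z ∉ unitSegment) : 1 - z⁻¹ ∈ slitPlane := by
  refine mem_slitPlane_iff_arg.mpr ⟨?_, ?_⟩
  · rw [arg_one_sub_inv hz]; exact (arg_sub_one_sub_arg_mem_Ioo hz).2.ne
  · rw [sub_ne_zero, ne_comm, inv_ne_one]
    exact sub_ne_zero.mp (sub_one_ne_zero_of_notMem_unitSegment hz)

lemma log_sub_one_eq_log_add_log (hz : z ∉ unitSegment) :
    log (z - 1) = log z + log (1 - z⁻¹) := by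
  have hz0 := ne_zero_of_notMem_unitSegment hz
  have hmul : z - 1 = z * (1 - z⁻¹) := by field_simp
  rw [hmul, log_mul_eq_add_log_iff hz0 (slitPlane_ne_zero (one_sub_inv_mem_slitPlane hz)),
    arg_one_sub_inv hz, add_sub_cancel]
  exact arg_mem_Ioc _

lemma phiMap_eq_mul_phiFactor_sq (hz : z ∉ unitSegment) : phiMap z = z * phiFactor z ^ 2 := by
  have hz0 := ne_zero_of_notMem_unitSegment hz
  have hq0 : 1 - z⁻¹ ≠ 0 := slitPlane_ne_zero (one_sub_inv_mem_slitPlane hz)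
  have hroots : z ^ ((1:ℂ)/2) * (z - 1) ^ ((1:ℂ)/2) = z * (1 - z⁻¹) ^ ((1:ℂ)/2) := by
    rw [cpow_def_of_ne_zero hz0, cpow_def_of_ne_zero (sub_one_ne_zero_of_notMem_unitSegment hz),
      cpow_def_of_ne_zero hq0, log_sub_one_eq_log_add_log hz, ← exp_add, ← exp_log hz0, ← exp_add,
      exp_log hz0]
    ring_nf
  have hmul : z * (1 - z⁻¹) = z - 1 := by field_simp
  unfold phiMap phiFactor
  linear_combination 2 * hroots - z * cpow_half_sq (1 - z⁻¹) - hmul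

lemma log_phiMap (hz : z ∉ unitSegment) : log (phiMap z) = log z + 2 * log (phiFactor z) := by
  have hz0 := ne_zero_of_notMem_unitSegment hz
  have hu : arg (phiFactor z) ∈ uIcc 0 ((arg (z - 1) - arg z) / 2) := by
    simpa only [phiFactor, arg_cpow_half, arg_one_sub_inv hz] using
      arg_one_add_mem_uIcc (re_cpow_half_nonneg (1 - z⁻¹))
  have harg : -π < arg z + 2 * arg (phiFactor z) ∧ arg z + 2 * arg (phiFactor z) ≤ π := by
    rcases mem_uIcc.mp hu with ⟨h1, h2⟩ | ⟨h1, h2⟩ <;> constructor <;>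
      linarith [neg_pi_lt_arg z, arg_le_pi z, neg_pi_lt_arg (z - 1), arg_le_pi (z - 1)]
  have hexp : exp (log z + 2 * log (phiFactor z)) = phiMap z := by
    rw [phiMap_eq_mul_phiFactor_sq hz, exp_add, exp_log hz0, two_mul, exp_add,
      exp_log (phiFactor_ne_zero z), sq]
  have him : (log z + 2 * log (phiFactor z)).im = arg z + 2 * arg (phiFactor z) := by
    simp [log_im]
  rw [← hexp, log_exp (him ▸ harg.1) (him ▸ harg.2)]

lemma szego_eq_phiFactor_cpow (hz : z ∉ unitSegment) (α : ℝ) :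
    szego α z = phiFactor z ^ (-(α : ℂ)) := by
  have hz0 := ne_zero_of_notMem_unitSegment hz
  have hφ0 : phiMap z ≠ 0 := by
    rw [phiMap_eq_mul_phiFactor_sq hz]
    exact mul_ne_zero hz0 (pow_ne_zero 2 (phiFactor_ne_zero z))
  rw [szego, cpow_def_of_ne_zero hz0, cpow_def_of_ne_zero hφ0,
    cpow_def_of_ne_zero (phiFactor_ne_zero z), log_phiMap hz, ← exp_sub]
  ring_nf

lemma differentiableAt_phiFactor (hz : z ∉ unitSegment) : DifferentiableAt ℂ phiFactor z :=
  (((differentiableAt_const 1).sub (differentiableAt_inv (ne_zero_of_notMem_unitSegment hz))).cpow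
    (differentiableAt_const _) (one_sub_inv_mem_slitPlane hz)).const_add 1

lemma szego_ne_zero (α : ℝ) (hz : z ∉ unitSegment) : szego α z ≠ 0 := by
  rw [szego_eq_phiFactor_cpow hz, Ne, cpow_eq_zero_iff]
  exact fun h => phiFactor_ne_zero z h.1

end OffSegment

lemma differentiableOn_szego (α : ℝ) : DifferentiableOn ℂ (szego α) unitSegmentᶜ := fun z hz =>
  ((differentiableAt_phiFactor hz).cpow (differentiableAt_const _)
    (phiFactor_mem_slitPlane z)).differentiableWithinAt.congr
    (fun _ hw => szego_eq_phiFactor_cpow hw α) (szego_eq_phiFactor_cpow hz α)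

lemma tendsto_szego_of_tendsto_phiFactor (α : ℝ) {l : Filter ℂ} {u : ℂ}
    (hl : ∀ᶠ z in l, z ∉ unitSegment) (h : Tendsto phiFactor l (𝓝 u)) (hu : u ∈ slitPlane) :
    Tendsto (szego α) l (𝓝 (u ^ (-(α : ℂ)))) :=
  (h.cpow tendsto_const_nhds hu).congr' (hl.mono fun _ hz => (szego_eq_phiFactor_cpow hz α).symm)

lemma tendsto_phiFactor_cobounded : Tendsto phiFactor (Bornology.cobounded ℂ) (𝓝 2) := by
  have hq : Tendsto (fun z : ℂ => 1 - z⁻¹) (Bornology.cobounded ℂ) (𝓝 1) := by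
    simpa using tendsto_inv₀_cobounded.const_sub (1 : ℂ)
  have h := (hq.cpow (tendsto_const_nhds (x := (1:ℂ)/2)) one_mem_slitPlane).const_add 1
  rwa [one_cpow, one_add_one_eq_two] at h

lemma eventually_notMem_unitSegment_cobounded :
    ∀ᶠ z in Bornology.cobounded ℂ, z ∉ unitSegment :=
  isCompact_unitSegment.isBounded

lemma tendsto_cpow_half_nhdsWithin_im_pos {r : ℝ} (hr : 0 ≤ r) :
    Tendsto (fun w : ℂ => w ^ ((1:ℂ)/2)) (𝓝[{w | 0 < w.im}] (-r : ℂ)) (𝓝 (√r * I)) := by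
  have hg : Continuous fun w : ℂ => (√((‖w‖ + w.re) / 2) : ℂ) + √((‖w‖ - w.re) / 2) * I := by
    fun_prop
  have hval : (√((‖(-r : ℂ)‖ + (-r : ℂ).re) / 2) : ℂ) + √((‖(-r : ℂ)‖ - (-r : ℂ).re) / 2) * I
      = √r * I := by
    simp [abs_of_nonneg hr]
  rw [← hval]
  exact (hg.tendsto _).mono_left nhdsWithin_le_nhds |>.congr'
    (eventually_nhdsWithin_of_forall fun _ hw => (cpow_half_eq_of_im_nonneg hw.le).symm)

lemma tendsto_cpow_half_nhdsWithin_im_neg {r : ℝ} (hr : 0 ≤ r) :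
    Tendsto (fun w : ℂ => w ^ ((1:ℂ)/2)) (𝓝[{w | w.im < 0}] (-r : ℂ)) (𝓝 (-(√r * I))) := by
  have hg : Continuous fun w : ℂ => (√((‖w‖ + w.re) / 2) : ℂ) - √((‖w‖ - w.re) / 2) * I := by
    fun_prop
  have hval : (√((‖(-r : ℂ)‖ + (-r : ℂ).re) / 2) : ℂ) - √((‖(-r : ℂ)‖ - (-r : ℂ).re) / 2) * I
      = -(√r * I) := by
    simp [abs_of_nonneg hr]
  rw [← hval]
  exact (hg.tendsto _).mono_left nhdsWithin_le_nhds |>.congr'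
    (eventually_nhdsWithin_of_forall fun _ hw => (cpow_half_eq_of_im_neg hw).symm)

lemma im_one_sub_inv (z : ℂ) : (1 - z⁻¹).im = z.im / normSq z := by
  simp [inv_im, neg_div]

lemma tendsto_one_sub_inv_ofReal {x : ℝ} (hx : 0 < x) :
    Tendsto (fun z : ℂ => 1 - z⁻¹) (𝓝 (x : ℂ)) (𝓝 (-((x⁻¹ - 1 : ℝ) : ℂ))) := by
  have : -((x⁻¹ - 1 : ℝ) : ℂ) = 1 - (x : ℂ)⁻¹ := by push_cast; ring
  rw [this]
  exact (continuousAt_const.sub (continuousAt_inv₀ (ofReal_ne_zero.mpr hx.ne'))).tendsto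

lemma tendsto_phiFactor_nhdsWithin_im_pos {x : ℝ} (hx0 : 0 < x) (hx1 : x ≤ 1) :
    Tendsto phiFactor (𝓝[{z | 0 < z.im}] (x : ℂ)) (𝓝 (1 + √(x⁻¹ - 1) * I)) := by
  have hq : Tendsto (fun z : ℂ => 1 - z⁻¹) (𝓝[{z | 0 < z.im}] (x : ℂ))
      (𝓝[{w | 0 < w.im}] (-((x⁻¹ - 1 : ℝ) : ℂ))) := by
    refine tendsto_nhdsWithin_iff.mpr ⟨(tendsto_one_sub_inv_ofReal hx0).mono_left
      nhdsWithin_le_nhds, eventually_nhdsWithin_of_forall fun z (hz : 0 < z.im) => ?_⟩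
    show 0 < (1 - z⁻¹).im
    rw [im_one_sub_inv]
    exact div_pos hz (normSq_pos.mpr fun h => by simp [h] at hz)
  exact ((tendsto_cpow_half_nhdsWithin_im_pos
    (sub_nonneg.mpr ((one_le_inv₀ hx0).mpr hx1))).comp hq).const_add 1

lemma tendsto_phiFactor_nhdsWithin_im_neg {x : ℝ} (hx0 : 0 < x) (hx1 : x ≤ 1) :
    Tendsto phiFactor (𝓝[{z | z.im < 0}] (x : ℂ)) (𝓝 (1 - √(x⁻¹ - 1) * I)) := by
  have hq : Tendsto (fun z : ℂ => 1 - z⁻¹) (𝓝[{z | z.im < 0}] (x : ℂ))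
      (𝓝[{w | w.im < 0}] (-((x⁻¹ - 1 : ℝ) : ℂ))) := by
    refine tendsto_nhdsWithin_iff.mpr ⟨(tendsto_one_sub_inv_ofReal hx0).mono_left
      nhdsWithin_le_nhds, eventually_nhdsWithin_of_forall fun z (hz : z.im < 0) => ?_⟩
    show (1 - z⁻¹).im < 0
    rw [im_one_sub_inv]
    exact div_neg_of_neg_of_pos hz (normSq_pos.mpr fun h => by simp [h] at hz)
  have h := ((tendsto_cpow_half_nhdsWithin_im_neg
    (sub_nonneg.mpr ((one_le_inv₀ hx0).mpr hx1))).comp hq).const_add 1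
  rwa [← sub_eq_add_neg] at h

lemma tendsto_szego_nhdsWithin_im_pos (α : ℝ) {x : ℝ} (hx0 : 0 < x) (hx1 : x ≤ 1) :
    Tendsto (szego α) (𝓝[{z | 0 < z.im}] (x : ℂ))
      (𝓝 ((1 + √(x⁻¹ - 1) * I) ^ (-(α : ℂ)))) :=
  tendsto_szego_of_tendsto_phiFactor α
    (eventually_nhdsWithin_of_forall fun _ hz => notMem_unitSegment_of_im_ne_zero (ne_of_gt hz))
    (tendsto_phiFactor_nhdsWithin_im_pos hx0 hx1) (mem_slitPlane_iff.mpr (Or.inl (by simp)))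

lemma tendsto_szego_nhdsWithin_im_neg (α : ℝ) {x : ℝ} (hx0 : 0 < x) (hx1 : x ≤ 1) :
    Tendsto (szego α) (𝓝[{z | z.im < 0}] (x : ℂ))
      (𝓝 ((1 - √(x⁻¹ - 1) * I) ^ (-(α : ℂ)))) :=
  tendsto_szego_of_tendsto_phiFactor α
    (eventually_nhdsWithin_of_forall fun _ hz => notMem_unitSegment_of_im_ne_zero (ne_of_lt hz))
    (tendsto_phiFactor_nhdsWithin_im_neg hx0 hx1) (mem_slitPlane_iff.mpr (Or.inl (by simp)))

lemma tendsto_add_mul_I_nhdsWithin_im_pos (x : ℝ) :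
    Tendsto (fun ε : ℝ => (x : ℂ) + ε * I) (𝓝[>] 0) (𝓝[{z | 0 < z.im}] (x : ℂ)) := by
  refine tendsto_nhdsWithin_iff.mpr
    ⟨?_, eventually_nhdsWithin_of_forall fun ε hε => by simpa using hε⟩
  have : Continuous fun ε : ℝ => (x : ℂ) + ε * I := by fun_prop
  simpa using (this.tendsto 0).mono_left nhdsWithin_le_nhds

lemma tendsto_sub_mul_I_nhdsWithin_im_neg (x : ℝ) :
    Tendsto (fun ε : ℝ => (x : ℂ) - ε * I) (𝓝[>] 0) (𝓝[{z | z.im < 0}] (x : ℂ)) := by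
  refine tendsto_nhdsWithin_iff.mpr
    ⟨?_, eventually_nhdsWithin_of_forall fun ε hε => by simpa using hε⟩
  have : Continuous fun ε : ℝ => (x : ℂ) - ε * I := by fun_prop
  simpa using (this.tendsto 0).mono_left nhdsWithin_le_nhds

lemma one_add_mul_I_cpow_mul_one_sub_mul_I_cpow (t : ℝ) (c : ℂ) :
    (1 + t * I) ^ c * (1 - t * I) ^ c = ((1 + t ^ 2 : ℝ) : ℂ) ^ c := by
  rw [← mul_cpow_of_re_pos (by simp) (by simp)]
  congr 1
  push_cast
  linear_combination (-(t : ℂ) ^ 2) * I_sq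

lemma szego_boundary_values_mul {x : ℝ} (hx0 : 0 < x) (hx1 : x ≤ 1) (α : ℝ) :
    (1 + √(x⁻¹ - 1) * I) ^ (-(α : ℂ)) * (1 - √(x⁻¹ - 1) * I) ^ (-(α : ℂ)) =
      (x : ℂ) ^ (α : ℂ) := by
  rw [one_add_mul_I_cpow_mul_one_sub_mul_I_cpow,
    Real.sq_sqrt (sub_nonneg.mpr ((one_le_inv₀ hx0).mpr hx1)), add_sub_cancel, ofReal_inv,
    inv_cpow _ _ (by rw [arg_ofReal_of_nonneg hx0.le]; exact Real.pi_pos.ne), cpow_neg, inv_inv]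

theorem szego_function_properties (α : ℝ) :
    DifferentiableOn ℂ (szego α) unitSegmentᶜ ∧
    (∀ z ∈ unitSegmentᶜ, szego α z ≠ 0) ∧
    (∀ x : ℝ, x ∈ Set.Ioo (0:ℝ) 1 → ∃ Dp Dm : ℂ,
      Tendsto (fun ε : ℝ => szego α ((x : ℂ) + ε * Complex.I))
        (nhdsWithin 0 (Set.Ioi 0)) (nhds Dp) ∧
      Tendsto (fun ε : ℝ => szego α ((x : ℂ) - ε * Complex.I))
        (nhdsWithin 0 (Set.Ioi 0)) (nhds Dm) ∧
      Dp * Dm = (x : ℂ) ^ (α : ℂ)) ∧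
    Tendsto (szego α) (comap (fun z : ℂ => ‖z‖) atTop) (nhds ((2 : ℂ) ^ (-α : ℂ))) := by
  refine ⟨differentiableOn_szego α, fun _ hz => szego_ne_zero α hz, fun x ⟨hx0, hx1⟩ => ?_, ?_⟩
  · exact ⟨_, _,
      (tendsto_szego_nhdsWithin_im_pos α hx0 hx1.le).comp
        (tendsto_add_mul_I_nhdsWithin_im_pos x),
      (tendsto_szego_nhdsWithin_im_neg α hx0 hx1.le).comp
        (tendsto_sub_mul_I_nhdsWithin_im_neg x),
      szego_boundary_values_mul hx0 hx1.le α⟩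
  · rw [show (fun z : ℂ => ‖z‖) = norm from rfl, comap_norm_atTop]
    exact tendsto_szego_of_tendsto_phiFactor α eventually_notMem_unitSegment_cobounded
      tendsto_phiFactor_cobounded (mem_slitPlane_iff.mpr (Or.inl (by norm_num)))
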